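/- Let σ > 0 and let Φ be the standard normal distribution function. Define w₂(y,t) = 2y·Φ(−1/(σ y √t)) for y > 0, t > 0. Then: (i) w₂ is a classical solution of w_t = (σ²/2)·y⁴·w_yy on y > 0, t > 0; (ii) for every fixed y > 0, w₂(y,t) → 0 as t → 0⁺; (iii) 0 < w₂(y,t) < y for all y > 0, t > 0, and for each fixed t > 0, w₂(y,t)/y → 1 as y → +∞. Hence the Cauchy problem for w_t = (σ²/2) y⁴ w_yy with zero initial data admits a nontrivial solution of linear growth. -/

import Mathlib

open Real MeasureTheory Filter Topology

/-- The standard normal distribution (Laplace) function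
`Φ(z) = (1/√(2π))·∫_{−∞}^{z} e^{−u²/2} du`. -/
noncomputable def stdNormalCDF (z : ℝ) : ℝ :=
  (1 / Real.sqrt (2 * Real.pi)) * ∫ u in Set.Iic z, Real.exp (-(u ^ 2) / 2)

/-- `w₂(y,t) = 2y·Φ(−1/(σ y √t))`. -/
noncomputable def w₂ (σ : ℝ) (y t : ℝ) : ℝ :=
  2 * y * stdNormalCDF (-(1 / (σ * y * Real.sqrt t)))

lemma integrable_gauss : Integrable (fun u : ℝ => Real.exp (-(u ^ 2) / 2)) := by
  have := integrable_exp_neg_mul_sq (by norm_num : (0:ℝ) < 1/2)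
  convert this using 2 with u
  ring_nf

lemma cont_gauss : Continuous (fun u : ℝ => Real.exp (-(u ^ 2) / 2)) := by
  continuity

lemma stdNormalCDF_eq (z : ℝ) : stdNormalCDF z =
    (1 / Real.sqrt (2 * Real.pi)) * ((∫ u in Set.Iic (0:ℝ), Real.exp (-(u ^ 2) / 2))
      + ∫ u in (0:ℝ)..z, Real.exp (-(u ^ 2) / 2)) := by
  rw [stdNormalCDF]
  congr 1
  have := intervalIntegral.integral_Iic_sub_Iic (integrable_gauss.integrableOn)
    (integrable_gauss.integrableOn) (a := (0:ℝ)) (b := z)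
  linarith [this]

lemma hasDerivAt_stdNormalCDF (z : ℝ) :
    HasDerivAt stdNormalCDF ((1 / Real.sqrt (2 * Real.pi)) * Real.exp (-(z ^ 2) / 2)) z := by
  have h : HasDerivAt (fun z => ∫ u in (0:ℝ)..z, Real.exp (-(u ^ 2) / 2))
      (Real.exp (-(z ^ 2) / 2)) z := by
    exact intervalIntegral.integral_hasDerivAt_right
      integrable_gauss.intervalIntegrable
      (cont_gauss.stronglyMeasurableAtFilter _ _) cont_gauss.continuousAt
  have h2 := ((h.const_add (∫ u in Set.Iic (0:ℝ), Real.exp (-(u ^ 2) / 2))).const_mul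
    (1 / Real.sqrt (2 * Real.pi)))
  refine h2.congr_of_eventuallyEq ?_
  filter_upwards with x
  rw [stdNormalCDF_eq]

lemma integral_Iic_zero_gauss :
    (∫ u in Set.Iic (0:ℝ), Real.exp (-(u ^ 2) / 2)) = Real.sqrt (2 * Real.pi) / 2 := by
  have h1 : (∫ u in Set.Iic (0:ℝ), Real.exp (-(u ^ 2) / 2))
      = ∫ u in Set.Ioi (0:ℝ), Real.exp (-(u ^ 2) / 2) := by
    rw [show Set.Ioi (0:ℝ) = Set.Ioi (-(0:ℝ)) by norm_num,
      ← integral_comp_neg_Iic (0:ℝ) (fun u => Real.exp (-(u ^ 2) / 2))]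
    norm_num
  rw [h1]
  have h2 := integral_gaussian_Ioi (1/2)
  have h3 : ∀ u : ℝ, Real.exp (-(u ^ 2) / 2) = Real.exp (-(1/2) * u ^ 2) := by
    intro u; ring_nf
  simp_rw [h3]
  rw [h2]
  rw [show Real.pi / (1/2) = 2 * Real.pi by ring]

lemma stdNormalCDF_zero : stdNormalCDF 0 = 1/2 := by
  rw [stdNormalCDF, integral_Iic_zero_gauss]
  have : Real.sqrt (2 * Real.pi) ≠ 0 := by
    positivity
  field_simp

lemma stdNormalCDF_pos (z : ℝ) : 0 < stdNormalCDF z := by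
  rw [stdNormalCDF]
  have h : 0 < ∫ u in Set.Iic z, Real.exp (-(u ^ 2) / 2) := by
    apply setIntegral_pos_iff_support_of_nonneg_ae ?_ integrable_gauss.integrableOn |>.2
    · have : Function.support (fun u : ℝ => Real.exp (-(u ^ 2) / 2)) = Set.univ := by
        ext u; simp [Real.exp_ne_zero]
      rw [this]
      simp
    · filter_upwards with u using (Real.exp_pos _).le
  positivity

lemma stdNormalCDF_strictMono : StrictMono stdNormalCDF := by
  have : ∀ z : ℝ, HasDerivAt stdNormalCDF ((1 / Real.sqrt (2 * Real.pi)) * Real.exp (-(z ^ 2) / 2)) z :=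
    hasDerivAt_stdNormalCDF
  exact strictMono_of_hasDerivAt_pos this (fun z => by positivity)

lemma stdNormalCDF_lt_half {z : ℝ} (hz : z < 0) : stdNormalCDF z < 1/2 := by
  have := stdNormalCDF_strictMono hz
  rwa [stdNormalCDF_zero] at this

lemma continuous_stdNormalCDF : Continuous stdNormalCDF := by
  have : Differentiable ℝ stdNormalCDF := fun z => (hasDerivAt_stdNormalCDF z).differentiableAt
  exact this.continuous

lemma tendsto_stdNormalCDF_atBot : Tendsto stdNormalCDF atBot (𝓝 0) := by
  have hub : ∀ᶠ z in atBot, stdNormalCDF z ≤ (1 / Real.sqrt (2 * Real.pi)) * Real.exp z := by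
    filter_upwards [eventually_le_atBot (-2 : ℝ)] with z hz
    rw [stdNormalCDF]
    have hmono : (∫ u in Set.Iic z, Real.exp (-(u ^ 2) / 2)) ≤ ∫ u in Set.Iic z, Real.exp u := by
      apply setIntegral_mono_on integrable_gauss.integrableOn
        (integrableOn_exp_Iic z) measurableSet_Iic
      intro u hu
      have hu' : u ≤ -2 := le_trans hu hz
      apply Real.exp_le_exp.2
      nlinarith
    rw [integral_exp_Iic] at hmono
    have hc : (0:ℝ) ≤ 1 / Real.sqrt (2 * Real.pi) := by positivity
    exact mul_le_mul_of_nonneg_left hmono hc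
  have hupper : Tendsto (fun z : ℝ => (1 / Real.sqrt (2 * Real.pi)) * Real.exp z) atBot (𝓝 0) := by
    have := Real.tendsto_exp_atBot.const_mul (1 / Real.sqrt (2 * Real.pi))
    simpa using this
  apply tendsto_of_tendsto_of_tendsto_of_le_of_le' tendsto_const_nhds hupper
  · filter_upwards with z using (stdNormalCDF_pos z).le
  · exact hub

noncomputable def φ₀ (z : ℝ) : ℝ := (1 / Real.sqrt (2 * Real.pi)) * Real.exp (-(z ^ 2) / 2)

lemma φ₀_pos (z : ℝ) : 0 < φ₀ z := by rw [φ₀]; positivity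

lemma hasDerivAt_φ₀ (z : ℝ) : HasDerivAt φ₀ (-z * φ₀ z) z := by
  have h1 : HasDerivAt (fun z : ℝ => -(z ^ 2) / 2) (-z) z := by
    have := ((hasDerivAt_pow 2 z).neg).div_const 2
    refine this.congr_deriv ?_; ring
  have h2 := (h1.exp).const_mul (1 / Real.sqrt (2 * Real.pi))
  refine h2.congr_deriv ?_
  rw [φ₀]; ring

lemma hasDerivAt_g_y (σ t : ℝ) (hσ : 0 < σ) (ht : 0 < t) {y : ℝ} (hy : 0 < y) :
    HasDerivAt (fun y' => -(1 / (σ * y' * Real.sqrt t))) (1 / (σ * y ^ 2 * Real.sqrt t)) y := by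
  have hs : 0 < Real.sqrt t := Real.sqrt_pos.2 ht
  have hne : σ * y * Real.sqrt t ≠ 0 := by positivity
  have h1 : HasDerivAt (fun y' => σ * y' * Real.sqrt t) (σ * Real.sqrt t) y := by
    simpa using ((hasDerivAt_id y).const_mul σ).mul_const (Real.sqrt t)
  have h2 := (h1.inv hne).neg
  have h3 : (fun y' => -(σ * y' * Real.sqrt t)⁻¹) = fun y' => -(1 / (σ * y' * Real.sqrt t)) := by
    funext y'; rw [one_div]
  change HasDerivAt (fun y' => -(σ * y' * Real.sqrt t)⁻¹) _ y at h2
  rw [h3] at h2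
  convert h2 using 1
  field_simp

noncomputable def D1 (σ t y : ℝ) : ℝ :=
  2 * stdNormalCDF (-(1 / (σ * y * Real.sqrt t)))
    + (2 / (σ * Real.sqrt t)) * (φ₀ (-(1 / (σ * y * Real.sqrt t))) / y)

lemma hasDerivAt_w₂_y (σ t : ℝ) (hσ : 0 < σ) (ht : 0 < t) {y : ℝ} (hy : 0 < y) :
    HasDerivAt (fun y' => w₂ σ y' t) (D1 σ t y) y := by
  have hs : 0 < Real.sqrt t := Real.sqrt_pos.2 ht
  have hg := hasDerivAt_g_y σ t hσ ht hy
  have hΦ : HasDerivAt (fun y' => stdNormalCDF (-(1 / (σ * y' * Real.sqrt t))))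
      (φ₀ (-(1 / (σ * y * Real.sqrt t))) * (1 / (σ * y ^ 2 * Real.sqrt t))) y :=
    (hasDerivAt_stdNormalCDF _).comp y hg
  have h2y : HasDerivAt (fun y' : ℝ => 2 * y') 2 y := by
    simpa using (hasDerivAt_id y).const_mul (2:ℝ)
  have h := h2y.mul hΦ
  refine h.congr_deriv ?_
  rw [D1]
  set A := stdNormalCDF (-(1 / (σ * y * Real.sqrt t)))
  set B := φ₀ (-(1 / (σ * y * Real.sqrt t)))
  field_simp

noncomputable def D2 (σ t y : ℝ) : ℝ :=
  (2 / (σ ^ 3 * y ^ 4 * Real.sqrt t ^ 3)) * φ₀ (-(1 / (σ * y * Real.sqrt t)))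

lemma hasDerivAt_D1 (σ t : ℝ) (hσ : 0 < σ) (ht : 0 < t) {y : ℝ} (hy : 0 < y) :
    HasDerivAt (fun y' => D1 σ t y') (D2 σ t y) y := by
  have hs : 0 < Real.sqrt t := Real.sqrt_pos.2 ht
  have hg := hasDerivAt_g_y σ t hσ ht hy
  have hΦ : HasDerivAt (fun y' => stdNormalCDF (-(1 / (σ * y' * Real.sqrt t))))
      (φ₀ (-(1 / (σ * y * Real.sqrt t))) * (1 / (σ * y ^ 2 * Real.sqrt t))) y :=
    (hasDerivAt_stdNormalCDF _).comp y hg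
  have hφ : HasDerivAt (fun y' => φ₀ (-(1 / (σ * y' * Real.sqrt t))))
      ((-(-(1 / (σ * y * Real.sqrt t))) * φ₀ (-(1 / (σ * y * Real.sqrt t))))
        * (1 / (σ * y ^ 2 * Real.sqrt t))) y :=
    (hasDerivAt_φ₀ _).comp y hg
  have hq := (hφ.div (hasDerivAt_id y) hy.ne').const_mul (2 / (σ * Real.sqrt t))
  have h := (hΦ.const_mul 2).add hq
  refine h.congr_deriv ?_
  rw [D2]
  simp only [id]
  set B := φ₀ (-(1 / (σ * y * Real.sqrt t)))
  field_simp
  ring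

lemma hasDerivAt_w₂_t (σ : ℝ) (hσ : 0 < σ) {y t : ℝ} (hy : 0 < y) (ht : 0 < t) :
    HasDerivAt (fun t' => w₂ σ y t')
      (φ₀ (-(1 / (σ * y * Real.sqrt t))) / (σ * t * Real.sqrt t)) t := by
  have hs : 0 < Real.sqrt t := Real.sqrt_pos.2 ht
  have hst : Real.sqrt t * Real.sqrt t = t := Real.mul_self_sqrt ht.le
  have h1 : HasDerivAt (fun t' => σ * y * Real.sqrt t') (σ * y * (1 / (2 * Real.sqrt t))) t :=
    (Real.hasDerivAt_sqrt ht.ne').const_mul (σ * y)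
  have hne : σ * y * Real.sqrt t ≠ 0 := by positivity
  have h2 := (h1.inv hne).neg
  have h3 : (fun t' => -(σ * y * Real.sqrt t')⁻¹) = fun t' => -(1 / (σ * y * Real.sqrt t')):= by
    funext t'; rw [one_div]
  change HasDerivAt (fun t' => -(σ * y * Real.sqrt t')⁻¹) _ t at h2
  rw [h3] at h2
  have hΦ : HasDerivAt (fun t' => stdNormalCDF (-(1 / (σ * y * Real.sqrt t'))))
      (φ₀ (-(1 / (σ * y * Real.sqrt t)))
        * -(-(σ * y * (1 / (2 * Real.sqrt t))) / (σ * y * Real.sqrt t) ^ 2)) t :=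
    (hasDerivAt_stdNormalCDF _).comp t h2
  have h4 := hΦ.const_mul (2 * y)
  have h5 : (fun t' => 2 * y * stdNormalCDF (-(1 / (σ * y * Real.sqrt t')))) =
      fun t' => w₂ σ y t' := by funext t'; rw [w₂]
  rw [h5] at h4
  refine h4.congr_deriv ?_
  set B := φ₀ (-(1 / (σ * y * Real.sqrt t)))
  rw [show σ * t * Real.sqrt t = σ * Real.sqrt t ^ 3 by rw [pow_succ, sq, hst]; ring]
  field_simp


/-- `w₂(y,t) = 2y·Φ(−1/(σ y √t))` is a classical solution of
`w_t = (σ²/2)·y⁴·w_yy` on `y > 0`, `t > 0`, vanishes as `t → 0⁺`, satisfies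
`0 < w₂(y,t) < y`, and `w₂(y,t)/y → 1` as `y → +∞`. Hence the zero-initial-data
Cauchy problem for this equation admits a nontrivial solution of linear
growth. -/
theorem w₂_nontrivial_linear_growth_solution (σ : ℝ) (hσ : 0 < σ) :
    (∀ y t : ℝ, 0 < y → 0 < t →
      ∃ py pyy pt : ℝ,
        HasDerivAt (fun y' => w₂ σ y' t) py y ∧
        HasDerivAt (deriv fun y' => w₂ σ y' t) pyy y ∧
        HasDerivAt (fun t' => w₂ σ y t') pt t ∧
        pt = σ ^ 2 / 2 * y ^ 4 * pyy) ∧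
    (∀ y : ℝ, 0 < y →
      Tendsto (fun t => w₂ σ y t) (𝓝[>] (0 : ℝ)) (𝓝 (0 : ℝ))) ∧
    (∀ y t : ℝ, 0 < y → 0 < t → 0 < w₂ σ y t ∧ w₂ σ y t < y) ∧
    (∀ t : ℝ, 0 < t →
      Tendsto (fun y => w₂ σ y t / y) atTop (𝓝 (1 : ℝ))) := by
  refine ⟨?_, ?_, ?_, ?_⟩
  · intro y t hy ht
    have hs : 0 < Real.sqrt t := Real.sqrt_pos.2 ht
    have hst : Real.sqrt t * Real.sqrt t = t := Real.mul_self_sqrt ht.le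
    refine ⟨D1 σ t y, D2 σ t y, φ₀ (-(1 / (σ * y * Real.sqrt t))) / (σ * t * Real.sqrt t),
      hasDerivAt_w₂_y σ t hσ ht hy, ?_, hasDerivAt_w₂_t σ hσ hy ht, ?_⟩
    · have heq : (fun y' => D1 σ t y') =ᶠ[𝓝 y] deriv (fun y' => w₂ σ y' t) := by
        filter_upwards [IsOpen.mem_nhds isOpen_Ioi hy] with y' hy'
        exact ((hasDerivAt_w₂_y σ t hσ ht hy').deriv).symm
      exact (hasDerivAt_D1 σ t hσ ht hy).congr_of_eventuallyEq heq.symm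
    · rw [D2]
      set B := φ₀ (-(1 / (σ * y * Real.sqrt t)))
      rw [show σ * t * Real.sqrt t = σ * Real.sqrt t ^ 3 by rw [pow_succ, sq, hst]; ring]
      field_simp
  · intro y hy
    have h1 : Tendsto (fun t : ℝ => σ * y * Real.sqrt t) (𝓝[>] 0) (𝓝[>] 0) := by
      rw [tendsto_nhdsWithin_iff]
      constructor
      · have : Tendsto (fun t : ℝ => σ * y * Real.sqrt t) (𝓝 0) (𝓝 (σ * y * Real.sqrt 0)) :=
          (continuous_const.mul Real.continuous_sqrt).tendsto 0
        simpa using this.mono_left nhdsWithin_le_nhds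
      · filter_upwards [self_mem_nhdsWithin] with t ht
        have : 0 < Real.sqrt t := Real.sqrt_pos.2 ht
        exact Set.mem_Ioi.2 (by positivity)
    have h2 : Tendsto (fun t : ℝ => -(1 / (σ * y * Real.sqrt t))) (𝓝[>] 0) atBot := by
      have h3 : Tendsto (fun t : ℝ => (σ * y * Real.sqrt t)⁻¹) (𝓝[>] 0) atTop :=
        tendsto_inv_nhdsGT_zero.comp h1
      simp only [one_div]
      exact tendsto_neg_atBot_iff.2 h3
    have h4 : Tendsto (fun t : ℝ => stdNormalCDF (-(1 / (σ * y * Real.sqrt t))))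
        (𝓝[>] 0) (𝓝 0) := tendsto_stdNormalCDF_atBot.comp h2
    have h5 := h4.const_mul (2 * y)
    simp only [mul_zero] at h5
    refine h5.congr (fun t => ?_)
    rw [w₂]
  · intro y t hy ht
    have hs : 0 < Real.sqrt t := Real.sqrt_pos.2 ht
    have hgneg : -(1 / (σ * y * Real.sqrt t)) < 0 := by
      have : 0 < 1 / (σ * y * Real.sqrt t) := by positivity
      linarith
    have hΦpos := stdNormalCDF_pos (-(1 / (σ * y * Real.sqrt t)))
    have hΦlt := stdNormalCDF_lt_half hgneg
    constructor
    · rw [w₂]; positivity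
    · rw [w₂]; nlinarith
  · intro t ht
    have hs : 0 < Real.sqrt t := Real.sqrt_pos.2 ht
    have h1 : Tendsto (fun y : ℝ => -(1 / (σ * y * Real.sqrt t))) atTop (𝓝 0) := by
      have h2 : Tendsto (fun y : ℝ => σ * y * Real.sqrt t) atTop atTop := by
        have := (tendsto_id (α := ℝ)).const_mul_atTop hσ
        exact (this.atTop_mul_const hs)
      have h3 : Tendsto (fun y : ℝ => (σ * y * Real.sqrt t)⁻¹) atTop (𝓝 0) :=
        h2.inv_tendsto_atTop
      simp only [one_div]
      simpa using h3.neg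
    have h4 : Tendsto (fun y : ℝ => stdNormalCDF (-(1 / (σ * y * Real.sqrt t))))
        atTop (𝓝 (stdNormalCDF 0)) := (continuous_stdNormalCDF.tendsto 0).comp h1
    rw [stdNormalCDF_zero] at h4
    have h5 := h4.const_mul (2 : ℝ)
    have h6 : (2 : ℝ) * (1/2) = 1 := by norm_num
    rw [h6] at h5
    refine h5.congr' ?_
    filter_upwards [eventually_gt_atTop (0:ℝ)] with y hy
    rw [w₂]
    field_simp
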